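/- Let a, b, c, d ∈ ℂ. For f : ℂ → ℂ define h : ℂ → ℂ by h(z) = f(iz/2). Then there exists a constant κ ∈ ℂ, independent of f and x (explicitly κ = (c+d)(a+b−1)), such that for every f and every x ∈ ℂ with 2ix ∉ {0, 1, −1}: (μ*^{(a,b,c,d)}(μ^{(a,b,c,d)}h))(−2ix) = B(x)·(f(x+i) − f(x)) + D(x)·(f(x−i) − f(x)) + κ·f(x), where B(x) = (a−ix)(b−ix)(c−ix)(d−ix)/(2ix(2ix−1)) and D(x) = (a+ix)(b+ix)(c+ix)(d+ix)/(2ix(2ix+1)). That is, the conjugation of Q = μ*^{(a,b,c,d)}μ^{(a,b,c,d)} by the grid scaling x ↦ −2ix is, up to an additive constant, the Wilson difference operator. -/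

import Mathlib

open Complex

noncomputable section

/-- The S–Heun lowering operator L on the quadratic grid λ_x = x². -/
def opL (f : ℂ → ℂ) : ℂ → ℂ := fun x => (f (x + 1) - f (x - 1)) / (4 * x)

/-- The stabilizing S–Heun operator M₁ on the quadratic grid. -/
def opM1 (f : ℂ → ℂ) : ℂ → ℂ :=
  fun x => ((2 * x - 1) * f (x + 1) + (2 * x + 1) * f (x - 1)) / (4 * x)

/-- The stabilizing S–Heun operator M₂ on the quadratic grid. -/
def opM2 (f : ℂ → ℂ) : ℂ → ℂ :=
  fun x => ((x ^ 2 + (x - 1) ^ 2) * f (x + 1) - ((x + 1) ^ 2 + x ^ 2) * f (x - 1)) / (4 * x)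

/-- The raising S–Heun operator R₁ = λ_x M₁ on the quadratic grid. -/
def opR1 (f : ℂ → ℂ) : ℂ → ℂ := fun x => x ^ 2 * opM1 f x

/-- The raising S–Heun operator R₂ = λ_x M₂ on the quadratic grid. -/
def opR2 (f : ℂ → ℂ) : ℂ → ℂ := fun x => x ^ 2 * opM2 f x

/-- The contiguity operator μ^{(a,b,c,d)} = uL + vM₁ + ½M₂,
u = ((4a−1)(4b−1)−1)/4, v = a+b−½. -/
def opMu (a b c d : ℂ) (f : ℂ → ℂ) : ℂ → ℂ :=
  fun x => (((4 * a - 1) * (4 * b - 1) - 1) / 4) * opL f x + (a + b - 1 / 2) * opM1 f x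
    + (1 / 2) * opM2 f x

/-- The contiguity operator μ*^{(a,b,c,d)} = μ^{(c+½,d+½,a−½,b−½)}. -/
def opMuStar (a b c d : ℂ) : (ℂ → ℂ) → ℂ → ℂ :=
  opMu (c + 1 / 2) (d + 1 / 2) (a - 1 / 2) (b - 1 / 2)

/-!
The operator `μ^{(p,q,r,s)}` is a two-term difference operator whose coefficients factor:
`4x · μg(x) = (x+2p−1)(x+2q−1) g(x+1) − (x−2p+1)(x−2q+1) g(x−1)`.
Composing two of them gives a three-term operator with steps `±2`; its outer coefficients are
the Wilson ones in the variable `y/2`, and the middle coefficient differs from minus their sum by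
a constant. The substitution `y = −2ix` turns the steps `±2` into `±i`.
-/

theorem opMu_apply (p q r s : ℂ) (g : ℂ → ℂ) (x : ℂ) :
    opMu p q r s g x
      = ((x + 2 * p - 1) * (x + 2 * q - 1) * g (x + 1)
          - (x - 2 * p + 1) * (x - 2 * q + 1) * g (x - 1)) / (4 * x) := by
  simp only [opMu, opL, opM1, opM2]
  ring

theorem opMuStar_opMu_apply (a b c d : ℂ) (g : ℂ → ℂ) {y : ℂ}
    (h0 : y ≠ 0) (hp : y + 1 ≠ 0) (hm : y - 1 ≠ 0) :
    opMuStar a b c d (opMu a b c d g) y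
      = ((a + y / 2) * (b + y / 2) * (c + y / 2) * (d + y / 2) / (y * (y + 1))) * (g (y + 2) - g y)
        + ((a - y / 2) * (b - y / 2) * (c - y / 2) * (d - y / 2) / (y * (y - 1))) * (g (y - 2) - g y)
        + (c + d) * (a + b - 1) * g y := by
  rw [opMuStar, opMu_apply, opMu_apply, opMu_apply, add_sub_cancel_right, sub_add_cancel]
  rw [show y + 1 + 1 = y + 2 by ring, show y - 1 - 1 = y - 2 by ring]
  field_simp
  ring

theorem stmt9 (a b c d : ℂ) :
    ∃ κ : ℂ, κ = (c + d) * (a + b - 1) ∧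
      ∀ f : ℂ → ℂ, ∀ x : ℂ,
        2 * I * x ≠ 0 → 2 * I * x ≠ 1 → 2 * I * x ≠ -1 →
          opMuStar a b c d (opMu a b c d (fun z => f (I * z / 2))) (-2 * I * x)
            = ((a - I * x) * (b - I * x) * (c - I * x) * (d - I * x)
                  / (2 * I * x * (2 * I * x - 1))) * (f (x + I) - f x)
              + ((a + I * x) * (b + I * x) * (c + I * x) * (d + I * x)
                  / (2 * I * x * (2 * I * x + 1))) * (f (x - I) - f x)
              + κ * f x := by
  refine ⟨_, rfl, fun f x hx0 hx1 hxm1 => ?_⟩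
  have h0 : -2 * I * x ≠ 0 := fun h => hx0 (by linear_combination -h)
  have hp : -2 * I * x + 1 ≠ 0 := fun h => hx1 (by linear_combination -h)
  have hm : -2 * I * x - 1 ≠ 0 := fun h => hxm1 (by linear_combination -h)
  rw [opMuStar_opMu_apply a b c d _ h0 hp hm]
  have hx : I * (-2 * I * x) / 2 = x := by linear_combination (-x) * I_mul_I
  have hxI : I * (-2 * I * x + 2) / 2 = x + I := by linear_combination (-x) * I_mul_I
  have hxmI : I * (-2 * I * x - 2) / 2 = x - I := by linear_combination (-x) * I_mul_I
  simp only [hx, hxI, hxmI]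
  ring
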